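/- arXiv:1703.02159 — 4 statements merged into one kernel-verified Lean document; each statement's English description precedes it below -/
import Mathlib

section
/- Under the assumptions of the previous setting, suppose additionally that F = -∇V for a smooth potential V : ℝⁿ → ℝ, and that φ(ξ) → E₋ as ξ → -∞ and φ(ξ) → E₊ as ξ → +∞. Then the front speed satisfies c = (V(E₊) - V(E₋)) / ‖φ'‖²_{L²(ℝ,ℝⁿ)}. -/
open MeasureTheory Filter Matrix
open scoped ContDiff ENNReal NNReal

/-- A continuous linear functional on `Fin n → ℝ` is determined by its values on
the standard basis. -/
lemma clm_apply_eq_sum {n : ℕ} (L : (Fin n → ℝ) →L[ℝ] ℝ) (x : Fin n → ℝ) :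
    L x = ∑ i, x i * L (Pi.single i 1) := by
  have hx : x = ∑ i, x i • (Pi.single i (1 : ℝ) : Fin n → ℝ) := by
    ext j
    simp [Pi.single_apply, Finset.sum_ite_eq, Finset.mem_univ]
  calc L x = L (∑ i, x i • (Pi.single i (1 : ℝ) : Fin n → ℝ)) := by rw [← hx]
    _ = ∑ i, x i * L (Pi.single i 1) := by
        rw [map_sum]
        simp [smul_eq_mul]

/-- when the reaction term derives from a potential (`F = -∇V`),
the front speed satisfies `c = (V(E₊) - V(E₋)) / ‖φ'‖²_{L²}`. -/
theorem stmt_1 (n : ℕ) (F : (Fin n → ℝ) → (Fin n → ℝ)) (hF : ContDiff ℝ (⊤ : ℕ∞) F)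
    (V : (Fin n → ℝ) → ℝ) (hV : ContDiff ℝ (⊤ : ℕ∞) V)
    (hFV : ∀ u : Fin n → ℝ, F u = fun i => -(fderiv ℝ V u (Pi.single i 1)))
    (D : Matrix (Fin n) (Fin n) ℝ) (hDsymm : D.IsSymm) (hDpos : D.PosDef)
    (c : ℝ) (φ : ℝ → Fin n → ℝ) (hφ : ContDiff ℝ (⊤ : ℕ∞) φ)
    (hODE : ∀ ξ : ℝ, (-c) • deriv φ ξ = F (φ ξ) + D.mulVec (deriv (deriv φ) ξ))
    (hL2phi' : MemLp (fun ξ => deriv φ ξ) 2 (volume : Measure ℝ))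
    (hL2F : MemLp (fun ξ => F (φ ξ)) 2 (volume : Measure ℝ))
    (hlimTop : Tendsto (deriv φ) atTop (nhds 0))
    (hlimBot : Tendsto (deriv φ) atBot (nhds 0))
    (Eminus Eplus : Fin n → ℝ)
    (hEminus : Tendsto φ atBot (nhds Eminus))
    (hEplus : Tendsto φ atTop (nhds Eplus))
    (hne : ∫ ξ : ℝ, deriv φ ξ ⬝ᵥ deriv φ ξ ≠ 0) :
    c = (V Eplus - V Eminus) / (∫ ξ : ℝ, deriv φ ξ ⬝ᵥ deriv φ ξ) := by
  set ψ : ℝ → Fin n → ℝ := deriv φ with hψdef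
  have hone : (1 : WithTop ℕ∞) ≤ (∞ : WithTop ℕ∞) := by exact_mod_cast le_top
  have hψ : ContDiff ℝ (∞ : WithTop ℕ∞) ψ :=
    (contDiff_infty_iff_deriv.mp (hφ.of_le (by simp))).2
  have hφd : ∀ ξ, HasDerivAt φ (ψ ξ) ξ :=
    fun ξ => (hφ.differentiable (by simp) ξ).hasDerivAt
  have hψd : ∀ ξ, HasDerivAt ψ (deriv ψ ξ) ξ :=
    fun ξ => (hψ.differentiable (by simp) ξ).hasDerivAt
  -- component HasDerivAt for ψ
  have hψdi : ∀ ξ (i : Fin n), HasDerivAt (fun ξ => ψ ξ i) (deriv ψ ξ i) ξ := by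
    intro ξ i
    exact ((ContinuousLinearMap.proj (R := ℝ) (φ := fun _ : Fin n => ℝ)
      i).hasFDerivAt.comp_hasDerivAt ξ (hψd ξ))
  -- integrability of dot products of two L² functions
  have hdotInt : ∀ (f g : ℝ → Fin n → ℝ), MemLp f 2 (volume : Measure ℝ) →
      MemLp g 2 (volume : Measure ℝ) → Integrable (fun ξ => f ξ ⬝ᵥ g ξ) := by
    intro f g hf hg
    have hcomp : ∀ (h : ℝ → Fin n → ℝ), MemLp h 2 (volume : Measure ℝ) →
        ∀ i : Fin n, MemLp (fun ξ => h ξ i) 2 (volume : Measure ℝ) := by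
      intro h hh i
      exact (ContinuousLinearMap.proj (R := ℝ) (φ := fun _ : Fin n => ℝ)
        i).comp_memLp' hh
    have hint : ∀ i : Fin n, Integrable (fun ξ => f ξ i * g ξ i) := by
      intro i
      have hpqr : (1 : ℝ≥0∞) / 1 = 1 / 2 + 1 / 2 := by
        rw [ENNReal.div_add_div_same, one_add_one_eq_two, div_one,
          ENNReal.div_self two_ne_zero ENNReal.ofNat_ne_top]
      have := MemLp.smul (p := 2) (q := 2) (r := 1)
        (hcomp g hg i) (hcomp f hf i)
      exact memLp_one_iff_integrable.mp this
    have := integrable_finset_sum (μ := (volume : Measure ℝ))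
      (Finset.univ : Finset (Fin n)) (fun i _ => hint i)
    refine this.congr ?_
    filter_upwards with ξ
    simp [dotProduct]
  -- pointwise : F(φ ξ) ⬝ᵥ ψ ξ = -(fderiv V (φ ξ) (ψ ξ))
  have hFdot : ∀ ξ, F (φ ξ) ⬝ᵥ ψ ξ = -(fderiv ℝ V (φ ξ) (ψ ξ)) := by
    intro ξ
    rw [clm_apply_eq_sum (fderiv ℝ V (φ ξ)) (ψ ξ), hFV (φ ξ)]
    simp [dotProduct, Finset.sum_neg_distrib, mul_comm]
  -- derivative of V ∘ φ
  have hVd : ∀ ξ, HasDerivAt (fun ξ => V (φ ξ)) (-(F (φ ξ) ⬝ᵥ ψ ξ)) ξ := by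
    intro ξ
    have h1 : HasFDerivAt V (fderiv ℝ V (φ ξ)) (φ ξ) :=
      (hV.differentiable (by simp) (φ ξ)).hasFDerivAt
    have h2 := h1.comp_hasDerivAt ξ (hφd ξ)
    have : -(F (φ ξ) ⬝ᵥ ψ ξ) = fderiv ℝ V (φ ξ) (ψ ξ) := by
      rw [hFdot ξ]; ring
    rw [this]
    exact h2
  -- integrability facts
  have hI1 : Integrable (fun ξ => F (φ ξ) ⬝ᵥ ψ ξ) := hdotInt _ _ hL2F hL2phi'
  have hI2 : Integrable (fun ξ => ψ ξ ⬝ᵥ ψ ξ) := hdotInt _ _ hL2phi' hL2phi'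
  -- ∫ -(F·ψ) = V E₊ - V E₋
  have hIntV : ∫ ξ : ℝ, -(F (φ ξ) ⬝ᵥ ψ ξ) = V Eplus - V Eminus := by
    apply integral_of_hasDerivAt_of_tendsto hVd hI1.neg
    · exact (hV.continuous.tendsto Eminus).comp hEminus
    · exact (hV.continuous.tendsto Eplus).comp hEplus
  -- symmetry of the bilinear form
  have hsymdot : ∀ x y : Fin n → ℝ, D.mulVec x ⬝ᵥ y = D.mulVec y ⬝ᵥ x := by
    intro x y
    simp only [dotProduct, Matrix.mulVec, Finset.sum_mul]
    rw [Finset.sum_comm]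
    refine Finset.sum_congr rfl fun i _ => Finset.sum_congr rfl fun j _ => ?_
    rw [hDsymm.apply i j]
    ring
  -- derivative of g = Dψ·ψ
  set g : ℝ → ℝ := fun ξ => D.mulVec (ψ ξ) ⬝ᵥ ψ ξ with hgdef
  have hgd : ∀ ξ, HasDerivAt g (2 * (D.mulVec (deriv ψ ξ) ⬝ᵥ ψ ξ)) ξ := by
    intro ξ
    have hsum : HasDerivAt (fun ξ => ∑ i, (∑ j, D i j * ψ ξ j) * ψ ξ i)
        (∑ i, ((∑ j, D i j * deriv ψ ξ j) * ψ ξ i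
          + (∑ j, D i j * ψ ξ j) * deriv ψ ξ i)) ξ := by
      apply HasDerivAt.fun_sum
      intro i _
      have hinner : HasDerivAt (fun ξ => ∑ j, D i j * ψ ξ j)
          (∑ j, D i j * deriv ψ ξ j) ξ := by
        apply HasDerivAt.fun_sum
        intro j _
        exact (hψdi ξ j).const_mul (D i j)
      exact hinner.mul (hψdi ξ i)
    have heq1 : g = fun ξ => ∑ i, (∑ j, D i j * ψ ξ j) * ψ ξ i := by
      funext ξ
      simp [hgdef, dotProduct, Matrix.mulVec]
    have heq2 : (∑ i, ((∑ j, D i j * deriv ψ ξ j) * ψ ξ i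
          + (∑ j, D i j * ψ ξ j) * deriv ψ ξ i))
        = 2 * (D.mulVec (deriv ψ ξ) ⬝ᵥ ψ ξ) := by
      rw [Finset.sum_add_distrib]
      have e1 : (∑ i, (∑ j, D i j * deriv ψ ξ j) * ψ ξ i)
          = D.mulVec (deriv ψ ξ) ⬝ᵥ ψ ξ := by
        simp [dotProduct, Matrix.mulVec]
      have e2 : (∑ i, (∑ j, D i j * ψ ξ j) * deriv ψ ξ i)
          = D.mulVec (ψ ξ) ⬝ᵥ deriv ψ ξ := by
        simp [dotProduct, Matrix.mulVec]
      rw [e1, e2, hsymdot (ψ ξ) (deriv ψ ξ)]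
      ring
    rw [heq1, ← heq2]
    exact hsum
  -- pointwise ODE dotted with ψ
  have hptwise : ∀ ξ, D.mulVec (deriv ψ ξ) ⬝ᵥ ψ ξ
      = -c * (ψ ξ ⬝ᵥ ψ ξ) - F (φ ξ) ⬝ᵥ ψ ξ := by
    intro ξ
    have h := congrArg (fun v => v ⬝ᵥ ψ ξ) (hODE ξ)
    simp only [smul_dotProduct, add_dotProduct, smul_eq_mul] at h
    linarith [h]
  -- limits of g at ±∞
  have hgcont : Continuous (fun x : Fin n → ℝ => D.mulVec x ⬝ᵥ x) := by
    simp only [dotProduct, Matrix.mulVec]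
    exact continuous_finset_sum _ fun i _ =>
      ((continuous_finset_sum _ fun j _ => (continuous_const.mul (continuous_apply j) : Continuous fun p : Fin n → ℝ => D i j * p j)).mul
        (continuous_apply i))
  have hgTop : Tendsto g atTop (nhds 0) := by
    have := (hgcont.tendsto 0).comp hlimTop
    simpa [hgdef, Function.comp_def] using this
  have hgBot : Tendsto g atBot (nhds 0) := by
    have := (hgcont.tendsto 0).comp hlimBot
    simpa [hgdef, Function.comp_def] using this
  -- integrability of g'
  have hI3 : Integrable (fun ξ => 2 * (D.mulVec (deriv ψ ξ) ⬝ᵥ ψ ξ)) := by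
    have : Integrable (fun ξ => 2 * (-c * (ψ ξ ⬝ᵥ ψ ξ) - F (φ ξ) ⬝ᵥ ψ ξ)) :=
      (((hI2.const_mul (-c)).sub hI1).const_mul 2)
    refine this.congr ?_
    filter_upwards with ξ
    rw [hptwise ξ]
  -- ∫ g' = 0
  have hIntg : ∫ ξ : ℝ, 2 * (D.mulVec (deriv ψ ξ) ⬝ᵥ ψ ξ) = 0 := by
    have := integral_of_hasDerivAt_of_tendsto hgd hI3 hgBot hgTop
    simpa using this
  -- rewrite the integral using the pointwise ODE
  have hIntg' : ∫ ξ : ℝ, 2 * (-c * (ψ ξ ⬝ᵥ ψ ξ) - F (φ ξ) ⬝ᵥ ψ ξ) = 0 := by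
    rw [← hIntg]
    apply integral_congr_ae
    filter_upwards with ξ
    rw [hptwise ξ]
  -- linearity of the integral
  have hlin : 2 * (-c * (∫ ξ : ℝ, ψ ξ ⬝ᵥ ψ ξ) - ∫ ξ : ℝ, F (φ ξ) ⬝ᵥ ψ ξ) = 0 := by
    rw [← hIntg']
    rw [integral_const_mul]
    congr 1
    rw [integral_sub (hI2.const_mul (-c)) hI1, integral_const_mul]
  have hIntF : ∫ ξ : ℝ, F (φ ξ) ⬝ᵥ ψ ξ = -(V Eplus - V Eminus) := by
    have := hIntV
    rw [integral_neg] at this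
    linarith
  rw [hIntF] at hlin
  have hI : (∫ ξ : ℝ, deriv φ ξ ⬝ᵥ deriv φ ξ) = ∫ ξ : ℝ, ψ ξ ⬝ᵥ ψ ξ := rfl
  rw [hI]
  have hne' : (∫ ξ : ℝ, ψ ξ ⬝ᵥ ψ ξ) ≠ 0 := hne
  field_simp
  linarith
end

section
/- Let F : ℝ² → ℝ² be smooth, D a symmetric 2×2 matrix, and S : ℝ² → ℝ² the swap map S(u₁,u₂) = (u₂,u₁). Suppose F∘S = S∘F, D S = S D, and φ : ℝ → ℝ² is a smooth nonconstant solution of -c φ'(ξ) = F(φ(ξ)) + D φ''(ξ) satisfying φ(-x) = S φ(x) for all x ∈ ℝ. Then c = 0. -/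
open Matrix

/-- Lemma 2.2: a symmetric front of a `u₁↔u₂`-symmetric
reaction-diffusion system is necessarily a standing front: `c = 0`. -/
theorem stmt_2 (F : (Fin 2 → ℝ) → (Fin 2 → ℝ)) (hF : ContDiff ℝ (⊤ : ℕ∞) F)
    (D : Matrix (Fin 2) (Fin 2) ℝ) (hDsymm : D.IsSymm)
    (S : (Fin 2 → ℝ) → (Fin 2 → ℝ)) (hS : ∀ u : Fin 2 → ℝ, S u = ![u 1, u 0])
    (hFS : ∀ u : Fin 2 → ℝ, F (S u) = S (F u))
    (hDS : ∀ u : Fin 2 → ℝ, D.mulVec (S u) = S (D.mulVec u))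
    (c : ℝ) (φ : ℝ → Fin 2 → ℝ) (hφ : ContDiff ℝ (⊤ : ℕ∞) φ)
    (hnonconst : ∃ x : ℝ, deriv φ x ≠ 0)
    (hODE : ∀ ξ : ℝ, (-c) • deriv φ ξ = F (φ ξ) + D.mulVec (deriv (deriv φ) ξ))
    (hsym : ∀ x : ℝ, φ (-x) = S (φ x)) :
    c = 0 := by
  have hSadd : ∀ a b : Fin 2 → ℝ, S (a + b) = S a + S b := by
    intro a b; funext i; fin_cases i <;> simp [hS]
  have hSsmul : ∀ (r : ℝ) (a : Fin 2 → ℝ), S (r • a) = r • S a := by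
    intro r a; funext i; fin_cases i <;> simp [hS]
  have hSS : ∀ a : Fin 2 → ℝ, S (S a) = a := by
    intro a; funext i; fin_cases i <;> simp [hS]
  have hSder : ∀ (ψ : ℝ → Fin 2 → ℝ), Differentiable ℝ ψ → ∀ x,
      HasDerivAt (fun y => S (ψ y)) (S (deriv ψ x)) x := by
    intro ψ hψ x
    rw [hasDerivAt_pi]
    intro i
    have h := hasDerivAt_pi.mp (hψ x).hasDerivAt
    fin_cases i <;> simp only [hS] <;> simpa using h _
  have hnegder : ∀ (ψ : ℝ → Fin 2 → ℝ), Differentiable ℝ ψ → ∀ x,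
      HasDerivAt (fun y => ψ (-y)) (-(deriv ψ (-x))) x := by
    intro ψ hψ x
    have := (hψ (-x)).hasDerivAt.scomp x (hasDerivAt_neg x)
    simpa [neg_one_smul, Function.comp_def] using this
  have hφd : Differentiable ℝ φ := hφ.differentiable (by simp)
  have hψc : ContDiff ℝ (⊤ : ℕ∞) (deriv φ) := (contDiff_infty_iff_deriv.mp (hφ.of_le (by simp))).2
  have hψd : Differentiable ℝ (deriv φ) := hψc.differentiable (by simp)
  -- first derivative symmetry: φ'(-x) = -S(φ'(x))
  have h1 : ∀ x : ℝ, deriv φ (-x) = -(S (deriv φ x)) := by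
    intro x
    have A := hnegder φ hφd x
    have B := hSder φ hφd x
    have A' : HasDerivAt (fun y => S (φ y)) (-(deriv φ (-x))) x := by
      have he : (fun y => φ (-y)) = fun y => S (φ y) := funext hsym
      rwa [he] at A
    exact neg_eq_iff_eq_neg.mp (A'.unique B)
  -- second derivative symmetry: φ''(-x) = S(φ''(x))
  have h2 : ∀ x : ℝ, deriv (deriv φ) (-x) = S (deriv (deriv φ) x) := by
    intro x
    have A := hnegder (deriv φ) hψd x
    have B := (hSder (deriv φ) hψd x).neg
    have A' : HasDerivAt (fun y => -(S (deriv φ y))) (-(deriv (deriv φ) (-x))) x := by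
      have he : (fun y => deriv φ (-y)) = fun y => -(S (deriv φ y)) := funext h1
      rwa [he] at A
    have := A'.unique B
    exact neg_injective this
  -- plug into the ODE at -ξ
  obtain ⟨x, hx⟩ := hnonconst
  have key := hODE (-x)
  rw [h1 x, h2 x, hsym x, hFS, hDS, ← hSadd, ← hODE x, hSsmul] at key
  have key2 : (c + c) • S (deriv φ x) = 0 := by
    have : (-c) • (-(S (deriv φ x))) = (-c) • S (deriv φ x) := by
      simpa using key
    have h3 : (c + c) • S (deriv φ x) = (-c) • (-(S (deriv φ x))) - (-c) • S (deriv φ x) := by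
      module
    rw [h3, this, sub_self]
  have hSne : S (deriv φ x) ≠ 0 := by
    intro h
    apply hx
    have := congrArg S h
    rw [hSS] at this
    rw [this]
    funext i; fin_cases i <;> simp [hS]
  rcases smul_eq_zero.mp key2 with h | h
  · linarith
  · exact absurd h hSne
end

section
/- Let f : [0,∞) → ℝ be continuous with f(t) → 0 as t → ∞ and f nonvanishing on (0,∞), with ∫₀^∞ |f(s)| e^{-s} ds < ∞. Then there exists a unique continuous function u : [0,∞) → ℝ, twice differentiable on (0,∞), solving u'' = u + f with u(0) = 0 and u(t) → 0 as t → ∞; moreover u does not vanish on (0,∞) and sgn(u(t)) = -sgn(f(t)) for all t > 0. -/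
open Filter Set MeasureTheory

/-- `u` is a solution of `u'' = u + f` on `(0,∞)`, continuous on `[0,∞)`,
with `u(0) = 0` and `u(t) → 0` as `t → ∞`. -/
def IsHomoclinicSol (f u : ℝ → ℝ) : Prop :=
  ContinuousOn u (Set.Ici 0) ∧ u 0 = 0 ∧ Tendsto u atTop (nhds 0) ∧
  (∀ t ∈ Set.Ioi (0:ℝ), DifferentiableAt ℝ u t) ∧
  (∀ t ∈ Set.Ioi (0:ℝ), HasDerivAt (deriv u) (u t + f t) t)



/-- At an interior global max with positive second derivative: contradiction. -/
lemma push_lemma (w : ℝ → ℝ) (t₁ c : ℝ) (ht₁ : 0 < t₁)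
    (hw : ContinuousOn w (Set.Ici 0))
    (hmax : ∀ t ∈ Set.Ici (0:ℝ), w t ≤ w t₁)
    (hdd : HasDerivAt (deriv w) c t₁) (hc : 0 < c) : False := by
  have hmem : Set.Ioi (0:ℝ) ∈ nhds t₁ := (isOpen_Ioi).mem_nhds ht₁
  have hloc : IsLocalMax w t₁ := by
    filter_upwards [hmem] with t ht
    exact hmax t (Set.mem_Ici.2 (le_of_lt ht))
  have hD0 : deriv w t₁ = 0 := hloc.deriv_eq_zero
  -- slope of deriv w tends to c > 0, so deriv w > 0 just right of t₁
  have hslope := hasDerivAt_iff_tendsto_slope.1 hdd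
  have hev : ∀ᶠ t in nhdsWithin t₁ {t₁}ᶜ, 0 < slope (deriv w) t₁ t :=
    hslope.eventually_const_lt hc
  have hev' : ∀ᶠ t in nhdsWithin t₁ (Set.Ioi t₁), 0 < deriv w t := by
    have : ∀ᶠ t in nhdsWithin t₁ (Set.Ioi t₁), 0 < slope (deriv w) t₁ t :=
      hev.filter_mono (nhdsWithin_mono t₁ (fun x hx => ne_of_gt hx))
    filter_upwards [this, self_mem_nhdsWithin] with t ht ht'
    have hts : 0 < t - t₁ := sub_pos.2 ht'
    have := ht
    rw [slope_def_field] at this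
    have h2 : deriv w t - deriv w t₁ > 0 := by
      have := mul_pos this hts
      rwa [div_mul_cancel₀] at this
      exact ne_of_gt hts
    rw [hD0] at h2; linarith
  obtain ⟨b, hb, hIoo⟩ := (nhdsGT_basis t₁).eventually_iff.1 hev'
  -- pick t₂ ∈ (t₁, b); strict mono on [t₁, t₂]
  set t₂ := (t₁ + min b (t₁ + 1)) / 2 with ht₂def
  have hbt : t₁ < min b (t₁ + 1) := lt_min hb (by linarith)
  have h12 : t₁ < t₂ := by simp only [ht₂def]; linarith
  have h2b : t₂ < b := by
    have : t₂ < min b (t₁ + 1) := by simp only [ht₂def]; linarith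
    exact this.trans_le (min_le_left _ _)
  have hsm : StrictMonoOn w (Set.Icc t₁ t₂) := by
    apply strictMonoOn_of_deriv_pos (convex_Icc _ _)
    · exact hw.mono (fun x hx => le_trans (le_of_lt ht₁) hx.1)
    · intro x hx
      rw [interior_Icc] at hx
      exact hIoo ⟨hx.1, lt_trans hx.2 h2b⟩
  have : w t₁ < w t₂ := hsm ⟨le_refl _, le_of_lt h12⟩ ⟨le_of_lt h12, le_refl _⟩ h12
  have : w t₂ ≤ w t₁ := hmax t₂ (le_of_lt (lt_trans ht₁ h12))
  linarith

/-- Maximum principle: if `w'' = w + h` with `h ≥ 0`, `w(0)=0`, `w → 0`, then `w ≤ 0`,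
strictly where `h > 0`. -/
lemma key_lemma (w h : ℝ → ℝ) (hw : ContinuousOn w (Set.Ici 0)) (hw0 : w 0 = 0)
    (hwtop : Tendsto w atTop (nhds 0))
    (hdd : ∀ t ∈ Set.Ioi (0:ℝ), HasDerivAt (deriv w) (w t + h t) t)
    (hh : ∀ t ∈ Set.Ioi (0:ℝ), 0 ≤ h t) :
    (∀ t ∈ Set.Ici (0:ℝ), w t ≤ 0) ∧ (∀ t ∈ Set.Ioi (0:ℝ), 0 < h t → w t < 0) := by
  have part1 : ∀ t ∈ Set.Ici (0:ℝ), w t ≤ 0 := by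
    by_contra hcon
    push_neg at hcon
    obtain ⟨t₀, ht₀, hwt₀⟩ := hcon
    have hev : ∀ᶠ t in atTop, w t < w t₀ := hwtop.eventually_lt_const hwt₀
    obtain ⟨T₀, hT₀⟩ := hev.exists_forall_of_atTop
    set T := max T₀ t₀ with hT
    have ht₀T : t₀ ≤ T := le_max_right _ _
    have hT0 : (0:ℝ) ≤ T := le_trans ht₀ ht₀T
    obtain ⟨t₁, ht₁mem, ht₁max⟩ := isCompact_Icc.exists_isMaxOn (Set.nonempty_Icc.2 hT0)
      (hw.mono (fun x hx => hx.1))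
    have ht₁max' : ∀ t ∈ Set.Ici (0:ℝ), w t ≤ w t₁ := by
      intro t ht
      rcases le_or_gt t T with h1 | h1
      · exact ht₁max ⟨ht, h1⟩
      · have : w t < w t₀ := hT₀ t (le_trans (le_max_left _ _) (le_of_lt h1))
        exact le_of_lt (lt_of_lt_of_le this (ht₁max ⟨ht₀, ht₀T⟩))
    have hwt₁ : 0 < w t₁ := lt_of_lt_of_le hwt₀ (ht₁max ⟨ht₀, ht₀T⟩)
    have ht₁pos : 0 < t₁ := by
      rcases eq_or_lt_of_le ht₁mem.1 with h1 | h1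
      · rw [← h1] at hwt₁; rw [hw0] at hwt₁; linarith
      · exact h1
    exact push_lemma w t₁ (w t₁ + h t₁) ht₁pos hw ht₁max' (hdd t₁ ht₁pos)
      (by have := hh t₁ ht₁pos; linarith)
  refine ⟨part1, fun t₀ ht₀ hht₀ => ?_⟩
  rcases lt_or_eq_of_le (part1 t₀ (Set.mem_Ici.2 (le_of_lt ht₀))) with h1 | h1
  · exact h1
  · exfalso
    have hmax : ∀ t ∈ Set.Ici (0:ℝ), w t ≤ w t₀ := by
      intro t ht; rw [h1]; exact part1 t ht
    exact push_lemma w t₀ (w t₀ + h t₀) ht₀ hw hmax (hdd t₀ ht₀) (by rw [h1]; linarith)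

lemma exists_sol (f : ℝ → ℝ) (hf : ContinuousOn f (Set.Ici 0))
    (hf0 : Tendsto f atTop (nhds 0))
    (hfint : IntegrableOn (fun s => |f s| * Real.exp (-s)) (Set.Ioi 0)) :
    ∃ u : ℝ → ℝ, ContinuousOn u (Set.Ici 0) ∧ u 0 = 0 ∧ Tendsto u atTop (nhds 0) ∧
      (∀ t ∈ Set.Ioi (0:ℝ), DifferentiableAt ℝ u t) ∧
      (∀ t ∈ Set.Ioi (0:ℝ), HasDerivAt (deriv u) (u t + f t) t) := by
  set g : ℝ → ℝ := fun s => f (max s 0) with hgdef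
  have hg : Continuous g :=
    hf.comp_continuous (continuous_id.max continuous_const) (fun x => le_max_right x 0)
  have hg_eq : ∀ s : ℝ, 0 ≤ s → g s = f s := by
    intro s hs; simp [hgdef, max_eq_left hs]
  have hgtop : Tendsto g atTop (nhds 0) := by
    apply hf0.congr'
    filter_upwards [eventually_ge_atTop (0:ℝ)] with s hs
    exact (hg_eq s hs).symm
  set φ : ℝ → ℝ := fun s => Real.exp (-s) * g s with hφdef
  set ψ : ℝ → ℝ := fun s => Real.exp s * g s with hψdef
  have hφcont : Continuous φ := (Real.continuous_exp.comp continuous_neg).mul hg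
  have hψcont : Continuous ψ := Real.continuous_exp.mul hg
  have hφint : IntegrableOn φ (Set.Ioi 0) := by
    apply Integrable.mono' hfint (hφcont.aestronglyMeasurable.restrict)
    rw [ae_restrict_iff' measurableSet_Ioi]
    filter_upwards with s hs
    have : g s = f s := hg_eq s (le_of_lt hs)
    simp only [hφdef, this, Real.norm_eq_abs, abs_mul, abs_of_pos (Real.exp_pos (-s))]
    rw [mul_comm]
  set A : ℝ → ℝ := fun t => ∫ s in (0:ℝ)..t, ψ s with hAdef
  set C : ℝ → ℝ := fun t => ∫ s in (0:ℝ)..t, φ s with hCdef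
  set B0 : ℝ := ∫ s in Set.Ioi (0:ℝ), φ s with hB0def
  have hA : ∀ t, HasDerivAt A (ψ t) t := fun t =>
    (hψcont.integral_hasStrictDerivAt 0 t).hasDerivAt
  have hC : ∀ t, HasDerivAt C (φ t) t := fun t =>
    (hφcont.integral_hasStrictDerivAt 0 t).hasDerivAt
  have hsplit : ∀ t : ℝ, 0 ≤ t → B0 - C t = ∫ s in Set.Ioi t, φ s := by
    intro t ht
    have h1 : B0 = (∫ s in Set.Ioc 0 t, φ s) + ∫ s in Set.Ioi t, φ s := by
      rw [hB0def, ← Ioc_union_Ioi_eq_Ioi ht,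
        setIntegral_union (Ioc_disjoint_Ioi le_rfl) measurableSet_Ioi
          (hφint.mono_set Ioc_subset_Ioi_self) (hφint.mono_set (Ioi_subset_Ioi ht))]
    have h2 : C t = ∫ s in Set.Ioc 0 t, φ s := intervalIntegral.integral_of_le ht
    rw [h1, h2]; ring
  have hexp : ∀ t : ℝ, HasDerivAt (fun t => Real.exp (-t)) (-Real.exp (-t)) t := by
    intro t
    have := ((hasDerivAt_id t).neg).exp
    simpa using this
  have hee : ∀ t : ℝ, Real.exp (-t) * Real.exp t = 1 := by
    intro t; rw [← Real.exp_add]; simp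
  have h1 : ∀ t, HasDerivAt (fun t => Real.exp (-t) * A t) (g t - Real.exp (-t) * A t) t := by
    intro t
    have := (hexp t).mul (hA t)
    refine this.congr_deriv ?_
    simp only [hψdef]
    linear_combination (g t) * hee t
  have h2 : ∀ t, HasDerivAt (fun t => Real.exp t * (B0 - C t))
      (Real.exp t * (B0 - C t) - g t) t := by
    intro t
    have := (Real.hasDerivAt_exp t).mul ((hasDerivAt_const t B0).sub (hC t))
    refine this.congr_deriv ?_
    simp only [hφdef, Pi.sub_apply]
    linear_combination (-(g t)) * hee t
  set u : ℝ → ℝ := fun t => -(1/2) * (Real.exp (-t) * A t + Real.exp t * (B0 - C t))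
      + B0/2 * Real.exp (-t) with hudef
  set u' : ℝ → ℝ := fun t => 1/2 * (Real.exp (-t) * A t) - 1/2 * (Real.exp t * (B0 - C t))
      - B0/2 * Real.exp (-t) with hu'def
  have hu' : ∀ t, HasDerivAt u (u' t) t := by
    intro t
    have := (((h1 t).add (h2 t)).const_mul (-(1/2 : ℝ))).add ((hexp t).const_mul (B0/2))
    refine this.congr_deriv ?_
    simp only [hu'def]; ring
  have hu'' : ∀ t, HasDerivAt u' (u t + g t) t := by
    intro t
    have := ((((h1 t).const_mul (1/2 : ℝ)).sub ((h2 t).const_mul (1/2 : ℝ)))).sub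
      ((hexp t).const_mul (B0/2))
    refine this.congr_deriv ?_
    simp only [hudef]; ring
  have hderiv : deriv u = u' := funext fun t => (hu' t).deriv
  -- limits
  have L1 : Tendsto (fun t => Real.exp (-t) * A t) atTop (nhds 0) := by
    rw [NormedAddCommGroup.tendsto_nhds_zero]
    intro ε hε
    obtain ⟨t₀, ht₀⟩ :=
      ((NormedAddCommGroup.tendsto_nhds_zero.1 hgtop) (ε/2) (by linarith)).exists_forall_of_atTop
    set t₁ := max t₀ 0 with ht₁def
    have hconst : Tendsto (fun t => Real.exp (-t) * ‖A t₁‖) atTop (nhds 0) := by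
      simpa using (Real.tendsto_exp_neg_atTop_nhds_zero.mul_const ‖A t₁‖)
    filter_upwards [eventually_ge_atTop t₁, hconst.eventually_lt_const (show (0:ℝ) < ε/2 by linarith)]
      with t ht hsmall
    have hAt : A t = A t₁ + ∫ s in t₁..t, ψ s := by
      simp only [hAdef]
      rw [← intervalIntegral.integral_add_adjacent_intervals
        (hψcont.intervalIntegrable 0 t₁) (hψcont.intervalIntegrable t₁ t)]
    have hbound : ‖∫ s in t₁..t, ψ s‖ ≤ (ε/2) * (Real.exp t - Real.exp t₁) := by
      have hle : ‖∫ s in t₁..t, ψ s‖ ≤ |∫ s in t₁..t, (ε/2) * Real.exp s| := by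
        apply intervalIntegral.norm_integral_le_abs_of_norm_le
        · rw [ae_restrict_iff' measurableSet_uIoc]
          filter_upwards with s hs
          have hs1 : t₁ < s := by
            have := hs.1
            rwa [min_eq_left ht] at this
          have : ‖g s‖ < ε/2 := ht₀ s (le_trans (le_max_left _ _) (le_of_lt hs1))
          simp only [hψdef, Real.norm_eq_abs, abs_mul, abs_of_pos (Real.exp_pos s)]
          rw [mul_comm]
          apply mul_le_mul_of_nonneg_right _ (le_of_lt (Real.exp_pos s))
          rw [Real.norm_eq_abs] at this; linarith
        · exact (continuous_const.mul Real.continuous_exp).intervalIntegrable _ _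
      calc ‖∫ s in t₁..t, ψ s‖ ≤ |∫ s in t₁..t, (ε/2) * Real.exp s| := hle
        _ = (ε/2) * (Real.exp t - Real.exp t₁) := by
            rw [intervalIntegral.integral_const_mul, integral_exp, abs_of_nonneg]
            have := Real.exp_le_exp.2 ht
            nlinarith
    have hexp_pos := Real.exp_pos (-t)
    have key : ‖Real.exp (-t) * A t‖ ≤ Real.exp (-t) * ‖A t₁‖ + ε/2 := by
      rw [norm_mul, Real.norm_eq_abs, abs_of_pos hexp_pos]
      have : ‖A t‖ ≤ ‖A t₁‖ + (ε/2) * (Real.exp t - Real.exp t₁) := by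
        rw [hAt]; exact le_trans (norm_add_le _ _) (by linarith)
      have h3 : Real.exp (-t) * ‖A t‖ ≤ Real.exp (-t) * (‖A t₁‖ + (ε/2) * (Real.exp t - Real.exp t₁)) :=
        mul_le_mul_of_nonneg_left this (le_of_lt hexp_pos)
      have h4 : Real.exp (-t) * Real.exp t = 1 := by rw [← Real.exp_add]; simp
      nlinarith [Real.exp_pos t₁, mul_pos hexp_pos (Real.exp_pos t₁), hε]
    calc ‖Real.exp (-t) * A t‖ ≤ Real.exp (-t) * ‖A t₁‖ + ε/2 := key
      _ < ε/2 + ε/2 := by linarith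
      _ = ε := by ring
  have L2 : Tendsto (fun t => Real.exp t * (B0 - C t)) atTop (nhds 0) := by
    rw [NormedAddCommGroup.tendsto_nhds_zero]
    intro ε hε
    obtain ⟨t₀, ht₀⟩ :=
      ((NormedAddCommGroup.tendsto_nhds_zero.1 hgtop) (ε/2) (by linarith)).exists_forall_of_atTop
    set t₁ := max t₀ 0 with ht₁def
    filter_upwards [eventually_ge_atTop t₁] with t ht
    have ht0 : (0:ℝ) ≤ t := le_trans (le_max_right _ _) ht
    have htail : B0 - C t = ∫ s in Set.Ioi t, φ s := hsplit t ht0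
    have hintexp : IntegrableOn (fun s => (ε/2) * Real.exp (-s)) (Set.Ioi t) := by
      have := exp_neg_integrableOn_Ioi t (show (0:ℝ) < 1 by norm_num)
      simp only [neg_mul, one_mul] at this
      exact this.const_mul _
    have hle : ‖∫ s in Set.Ioi t, φ s‖ ≤ ∫ s in Set.Ioi t, (ε/2) * Real.exp (-s) := by
      apply norm_integral_le_of_norm_le hintexp
      rw [ae_restrict_iff' measurableSet_Ioi]
      filter_upwards with s hs
      have : ‖g s‖ < ε/2 := ht₀ s (le_trans (le_max_left _ _) (le_of_lt (lt_of_le_of_lt ht hs)))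
      simp only [hφdef, Real.norm_eq_abs, abs_mul, abs_of_pos (Real.exp_pos (-s))]
      rw [mul_comm (ε/2)]
      apply mul_le_mul_of_nonneg_left _ (le_of_lt (Real.exp_pos (-s)))
      rw [Real.norm_eq_abs] at this; linarith
    have hval : ∫ s in Set.Ioi t, (ε/2) * Real.exp (-s) = (ε/2) * Real.exp (-t) := by
      rw [integral_const_mul, integral_exp_neg_Ioi]
    have h4 : Real.exp t * Real.exp (-t) = 1 := by rw [← Real.exp_add]; simp
    calc ‖Real.exp t * (B0 - C t)‖ = Real.exp t * ‖B0 - C t‖ := by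
          rw [norm_mul, Real.norm_eq_abs, abs_of_pos (Real.exp_pos t)]
      _ ≤ Real.exp t * ((ε/2) * Real.exp (-t)) := by
          apply mul_le_mul_of_nonneg_left _ (le_of_lt (Real.exp_pos t))
          rw [htail]; rw [hval] at hle; exact hle
      _ = ε/2 := by rw [show Real.exp t * ((ε/2) * Real.exp (-t)) = (ε/2) * (Real.exp t * Real.exp (-t)) by ring, h4, mul_one]
      _ < ε := by linarith
  have hutop : Tendsto u atTop (nhds 0) := by
    have := ((L1.add L2).const_mul (-(1/2 : ℝ))).add
      (Real.tendsto_exp_neg_atTop_nhds_zero.const_mul (B0/2))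
    rw [show (0:ℝ) = -(1/2) * ((0:ℝ)+0) + B0/2 * 0 by ring]
    exact this
  refine ⟨u, ?_, ?_, hutop, fun t _ => (hu' t).differentiableAt, fun t ht => ?_⟩
  · exact (continuous_iff_continuousAt.2 fun t => (hu' t).continuousAt).continuousOn
  · simp only [hudef, hAdef, hCdef, intervalIntegral.integral_same, neg_zero, Real.exp_zero]
    ring
  · rw [hderiv, ← hg_eq t (le_of_lt ht)]
    exact hu'' t


/-- Negation transfer: if `u` solves with `f`, then `-u` solves with `-f`. -/
lemma neg_sol (f u : ℝ → ℝ) (h : IsHomoclinicSol f u) :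
    IsHomoclinicSol (fun t => -f t) (fun t => -u t) := by
  obtain ⟨h1, h2, h3, h4, h5⟩ := h
  refine ⟨h1.neg, by simp [h2], by simpa using h3.neg, fun t ht => (h4 t ht).neg, fun t ht => ?_⟩
  have hdneg : deriv (fun t => -u t) = fun s => -deriv u s := by
    funext s; exact deriv.neg
  rw [hdneg]
  have := (h5 t ht).neg
  refine this.congr_deriv ?_
  ring

lemma homoclinic_nonpos (f u : ℝ → ℝ) (h : IsHomoclinicSol f u)
    (hh : ∀ t ∈ Set.Ioi (0:ℝ), 0 ≤ f t) :
    (∀ t ∈ Set.Ici (0:ℝ), u t ≤ 0) ∧ (∀ t ∈ Set.Ioi (0:ℝ), 0 < f t → u t < 0) := by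
  obtain ⟨h1, h2, h3, _, h5⟩ := h
  exact key_lemma u f h1 h2 h3 h5 hh

/-- appendix Lemma A.1: existence, uniqueness on `[0,∞)`, and sign
of the solution of `u'' = u + f` homoclinic to zero. -/
theorem stmt_5 (f : ℝ → ℝ) (hf : ContinuousOn f (Set.Ici 0))
    (hf0 : Tendsto f atTop (nhds 0))
    (hfne : ∀ t ∈ Set.Ioi (0:ℝ), f t ≠ 0)
    (hfint : IntegrableOn (fun s => |f s| * Real.exp (-s)) (Set.Ioi 0)) :
    (∃ u : ℝ → ℝ, IsHomoclinicSol f u ∧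
      ∀ v : ℝ → ℝ, IsHomoclinicSol f v → Set.EqOn v u (Set.Ici 0)) ∧
    (∀ u : ℝ → ℝ, IsHomoclinicSol f u →
      ∀ t ∈ Set.Ioi (0:ℝ), u t ≠ 0 ∧ u t * f t < 0) := by
  obtain ⟨u, hu1, hu2, hu3, hu4, hu5⟩ := exists_sol f hf hf0 hfint
  have husol : IsHomoclinicSol f u := ⟨hu1, hu2, hu3, hu4, hu5⟩
  -- uniqueness
  have huniq : ∀ v : ℝ → ℝ, IsHomoclinicSol f v → Set.EqOn v u (Set.Ici 0) := by
    intro v hv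
    obtain ⟨hv1, hv2, hv3, hv4, hv5⟩ := hv
    set w : ℝ → ℝ := fun t => v t - u t with hwdef
    have hwc : ContinuousOn w (Set.Ici 0) := hv1.sub hu1
    have hw0 : w 0 = 0 := by simp [hwdef, hv2, hu2]
    have hwtop : Tendsto w atTop (nhds 0) := by simpa using hv3.sub hu3
    have hwd : ∀ t ∈ Set.Ioi (0:ℝ), HasDerivAt (deriv w) (w t + 0) t := by
      intro t ht
      have heq : deriv w =ᶠ[nhds t] fun s => deriv v s - deriv u s := by
        filter_upwards [isOpen_Ioi.mem_nhds ht] with s hs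
        exact deriv_sub (hv4 s hs) (hu4 s hs)
      have hsub : HasDerivAt (fun s => deriv v s - deriv u s)
          ((v t + f t) - (u t + f t)) t := (hv5 t ht).sub (hu5 t ht)
      have := hsub.congr_of_eventuallyEq heq
      refine this.congr_deriv ?_
      simp [hwdef]
    have hwd' : ∀ t ∈ Set.Ioi (0:ℝ), HasDerivAt (deriv (fun t => -w t)) (-w t + 0) t := by
      intro t ht
      have hdneg : deriv (fun t => -w t) = fun s => -deriv w s := by
        funext s; exact deriv.neg
      rw [hdneg]
      have := (hwd t ht).neg
      refine this.congr_deriv ?_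
      ring
    have k1 := key_lemma w (fun _ => 0) hwc hw0 hwtop hwd (fun _ _ => le_refl _)
    have k2 := key_lemma (fun t => -w t) (fun _ => 0) hwc.neg (by simp [hw0])
      (by simpa using hwtop.neg) hwd' (fun _ _ => le_refl _)
    intro t ht
    have a1 := k1.1 t ht
    have a2 : -(w t) ≤ 0 := k2.1 t ht
    have : w t = 0 := le_antisymm a1 (by linarith)
    have : v t - u t = 0 := this
    linarith
  -- sign
  have hsign : (∀ t ∈ Set.Ioi (0:ℝ), 0 < f t) ∨ (∀ t ∈ Set.Ioi (0:ℝ), f t < 0) := by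
    rcases lt_or_gt_of_ne (hfne 1 (by norm_num)) with h1 | h1
    · right
      intro t ht
      by_contra hc
      push_neg at hc
      have hc' : 0 < f t := lt_of_le_of_ne hc (Ne.symm (hfne t ht))
      have hsub : Set.uIcc t (1:ℝ) ⊆ Set.Ioi 0 := by
        intro x hx
        have := hx.1
        have hmin : 0 < min t 1 := lt_min ht one_pos
        exact lt_of_lt_of_le hmin this
      have hcont : ContinuousOn f (Set.uIcc t 1) :=
        hf.mono (fun x hx => Set.mem_Ici.2 (le_of_lt (hsub hx)))
      have h0mem : (0:ℝ) ∈ Set.uIcc (f t) (f 1) := by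
        rw [Set.mem_uIcc]
        right
        exact ⟨le_of_lt h1, le_of_lt hc'⟩
      obtain ⟨s, hs, hfs⟩ := intermediate_value_uIcc hcont h0mem
      exact hfne s (hsub hs) hfs
    · left
      intro t ht
      by_contra hc
      push_neg at hc
      have hc' : f t < 0 := lt_of_le_of_ne hc (hfne t ht)
      have hsub : Set.uIcc t (1:ℝ) ⊆ Set.Ioi 0 := by
        intro x hx
        have := hx.1
        have hmin : 0 < min t 1 := lt_min ht one_pos
        exact lt_of_lt_of_le hmin this
      have hcont : ContinuousOn f (Set.uIcc t 1) :=
        hf.mono (fun x hx => Set.mem_Ici.2 (le_of_lt (hsub hx)))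
      have h0mem : (0:ℝ) ∈ Set.uIcc (f t) (f 1) := by
        rw [Set.mem_uIcc]
        left
        exact ⟨le_of_lt hc', le_of_lt h1⟩
      obtain ⟨s, hs, hfs⟩ := intermediate_value_uIcc hcont h0mem
      exact hfne s (hsub hs) hfs
  refine ⟨⟨u, husol, huniq⟩, ?_⟩
  intro p hp t ht
  rcases hsign with hpos | hneg
  · have := (homoclinic_nonpos f p hp (fun s hs => le_of_lt (hpos s hs))).2 t ht (hpos t ht)
    exact ⟨ne_of_lt this, mul_neg_of_neg_of_pos this (hpos t ht)⟩
  · have hneg' := homoclinic_nonpos (fun s => -f s) (fun s => -p s) (neg_sol f p hp)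
      (fun s hs => neg_nonneg.2 (hneg s hs).le)
    have := hneg'.2 t ht (neg_pos.2 (hneg t ht))
    have hthis : -(p t) < 0 := this
    have hpt : 0 < p t := by linarith
    exact ⟨ne_of_gt hpt, mul_neg_of_pos_of_neg hpt (hneg t ht)⟩
end

section
/- Let φ_L(x) = tanh(√μ x/2) with μ > 0, and let N = (∫_{-∞}^{∞} φ_L'(x)² dx)^{-1}. Suppose ψ_T : ℝ → ℝ is a bounded C² solution of ψ_T'' = ψ_T + N(1-μ) φ_L φ_L' on [0,∞) with ψ_T(0) = 0 and ψ_T(x) → 0 as x → ∞. Then: if μ < 1 then ψ_T(x) < 0 for all x > 0; if μ = 1 then ψ_T ≡ 0; if μ > 1 then ψ_T(x) > 0 for all x > 0. -/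
open MeasureTheory Set

section Aux
open Filter Topology

private lemma noLocalMax19 {u : ℝ → ℝ} (hu : ContDiff ℝ 2 u) {x0 : ℝ}
    (hmax : IsLocalMax u x0) (hpos : 0 < deriv (deriv u) x0) : False := by
  have h2 : ContDiff ℝ 1 (deriv u) := by
    have := (contDiff_succ_iff_deriv (n := 1)).mp (by exact_mod_cast hu)
    exact this.2.2
  have hd2 : DifferentiableAt ℝ (deriv u) x0 := (h2.differentiable one_ne_zero) x0
  have h1 : deriv u x0 = 0 := hmax.deriv_eq_zero
  have hda : HasDerivAt (deriv u) (deriv (deriv u) x0) x0 := hd2.hasDerivAt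
  have hslope : Tendsto (slope (deriv u) x0) (𝓝[>] x0) (𝓝 (deriv (deriv u) x0)) :=
    (hasDerivAt_iff_tendsto_slope.mp hda).mono_left
      (nhdsWithin_mono _ (fun z hz => ne_of_gt hz))
  have ev1 : ∀ᶠ z in 𝓝[>] x0, 0 < slope (deriv u) x0 z :=
    hslope.eventually (eventually_gt_nhds hpos)
  have ev1' : ∀ᶠ z in 𝓝[>] x0, 0 < deriv u z := by
    filter_upwards [ev1, self_mem_nhdsWithin] with z hz (hz' : x0 < z)
    have : slope (deriv u) x0 z = (deriv u z - deriv u x0) / (z - x0) := by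
      rw [slope_def_field]
    rw [this, h1, sub_zero] at hz
    have := mul_pos hz (sub_pos.mpr hz')
    rwa [div_mul_cancel₀] at this
    exact ne_of_gt (sub_pos.mpr hz')
  have ev2 : ∀ᶠ z in 𝓝[>] x0, u z ≤ u x0 := hmax.filter_mono nhdsWithin_le_nhds
  obtain ⟨b, hb, hsub⟩ := (mem_nhdsGT_iff_exists_Ioc_subset).mp (ev1'.and ev2)
  have hbx : x0 < b := hb
  have hmono : StrictMonoOn u (Icc x0 b) := by
    apply strictMonoOn_of_deriv_pos (convex_Icc x0 b) (hu.continuous.continuousOn)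
    intro z hz
    rw [interior_Icc] at hz
    exact (hsub ⟨hz.1, hz.2.le⟩).1
  have : u x0 < u b := hmono (left_mem_Icc.mpr hbx.le) (right_mem_Icc.mpr hbx.le) hbx
  exact absurd (hsub ⟨hbx, le_rfl⟩).2 (not_le.mpr this)

private lemma nonpos_aux19 {u f : ℝ → ℝ} (hu : ContDiff ℝ 2 u)
    (hODE : ∀ x ∈ Ici (0:ℝ), deriv (deriv u) x = u x + f x)
    (hf : ∀ x ∈ Ici (0:ℝ), 0 ≤ f x) (h0 : u 0 = 0)
    (hlim : Tendsto u atTop (𝓝 0)) : ∀ x ∈ Ici (0:ℝ), u x ≤ 0 := by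
  by_contra hc
  push_neg at hc
  obtain ⟨x1, hx1, hux1⟩ := hc
  have hev : ∀ᶠ x in atTop, u x < u x1 := hlim.eventually (eventually_lt_nhds hux1)
  obtain ⟨R, hR⟩ := hev.exists_forall_of_atTop
  set R' : ℝ := max R x1 with hR'
  have hR'0 : 0 ≤ R' := le_trans hx1 (le_max_right _ _)
  obtain ⟨x0, hx0mem, hx0max⟩ := isCompact_Icc.exists_isMaxOn (s := Icc 0 R')
    ⟨0, left_mem_Icc.mpr hR'0⟩ hu.continuous.continuousOn
  have hx1mem : x1 ∈ Icc 0 R' := ⟨hx1, le_max_right _ _⟩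
  have hux0 : 0 < u x0 := lt_of_lt_of_le hux1 (hx0max hx1mem)
  have hglobal : ∀ y ∈ Ici (0:ℝ), u y ≤ u x0 := by
    intro y hy
    rcases le_or_gt y R' with h | h
    · exact hx0max ⟨hy, h⟩
    · exact le_trans (hR y (le_trans (le_max_left _ _) h.le)).le (hx0max hx1mem)
  have hx0pos : 0 < x0 := by
    rcases hx0mem.1.lt_or_eq with h | h
    · exact h
    · exfalso; rw [← h, h0] at hux0; exact lt_irrefl 0 hux0
  have hloc : IsLocalMax u x0 := by
    filter_upwards [isOpen_Ioi.mem_nhds hx0pos] with z (hz : 0 < z)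
    exact hglobal z hz.le
  have : 0 < deriv (deriv u) x0 := by
    rw [hODE x0 hx0pos.le]
    exact add_pos_of_pos_of_nonneg hux0 (hf x0 hx0pos.le)
  exact noLocalMax19 hu hloc this

private lemma neg_aux19 {u f : ℝ → ℝ} (hu : ContDiff ℝ 2 u)
    (hODE : ∀ x ∈ Ici (0:ℝ), deriv (deriv u) x = u x + f x)
    (hf : ∀ x ∈ Ici (0:ℝ), 0 ≤ f x) (hf' : ∀ x > (0:ℝ), 0 < f x)
    (h0 : u 0 = 0) (hlim : Tendsto u atTop (𝓝 0)) : ∀ x > (0:ℝ), u x < 0 := by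
  have hnp := nonpos_aux19 hu hODE hf h0 hlim
  intro x0 hx0
  rcases (hnp x0 hx0.le).lt_or_eq with h | h
  · exact h
  · exfalso
    have hloc : IsLocalMax u x0 := by
      filter_upwards [isOpen_Ioi.mem_nhds hx0] with z (hz : 0 < z)
      rw [h]
      exact hnp z hz.le
    have : 0 < deriv (deriv u) x0 := by
      rw [hODE x0 hx0.le, h, zero_add]
      exact hf' x0 hx0
    exact noLocalMax19 hu hloc this

private lemma tanh_hasDerivAt19 (t : ℝ) :
    HasDerivAt Real.tanh (1 / Real.cosh t ^ 2) t := by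
  have h : HasDerivAt (fun s => Real.sinh s / Real.cosh s)
      ((Real.cosh t * Real.cosh t - Real.sinh t * Real.sinh t) / Real.cosh t ^ 2) t :=
    (Real.hasDerivAt_sinh t).div (Real.hasDerivAt_cosh t) (ne_of_gt (Real.cosh_pos t))
  have e1 : Real.cosh t * Real.cosh t - Real.sinh t * Real.sinh t = 1 := by
    have := Real.cosh_sq_sub_sinh_sq t
    nlinarith [this]
  rw [e1] at h
  exact h.congr_of_eventuallyEq (Filter.Eventually.of_forall fun s =>
    (Real.tanh_eq_sinh_div_cosh s))

private lemma phi_hasDerivAt19 (μ : ℝ) (x : ℝ) :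
    HasDerivAt (fun x => Real.tanh (Real.sqrt μ * x / 2))
      (Real.sqrt μ / 2 / Real.cosh (Real.sqrt μ * x / 2) ^ 2) x := by
  have hin : HasDerivAt (fun x : ℝ => Real.sqrt μ * x / 2) (Real.sqrt μ / 2) x := by
    simpa using ((hasDerivAt_id x).const_mul (Real.sqrt μ)).div_const 2
  have := (tanh_hasDerivAt19 (Real.sqrt μ * x / 2)).comp x hin
  convert this using 1
  rfl
  rfl
  rfl
  ring
  try left; ring

private lemma g2_integrable19 (μ : ℝ) (hμ : 0 < μ) :
    Integrable (fun x : ℝ => (Real.sqrt μ / 2 / Real.cosh (Real.sqrt μ * x / 2) ^ 2) ^ 2) := by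
  set c : ℝ := Real.sqrt μ / 2 with hc
  have hcpos : 0 < c := by positivity
  set F : ℝ → ℝ := fun x => (c / Real.cosh (Real.sqrt μ * x / 2) ^ 2) ^ 2 with hF
  have hcont : Continuous F := by
    apply Continuous.pow
    apply Continuous.div continuous_const
    · exact (Real.continuous_cosh.comp (by continuity)).pow 2
    · intro x; positivity
  have hbound : ∀ x : ℝ, 0 ≤ x → F x ≤ 16 * c ^ 2 * Real.exp (-(4 * c) * x) := by
    intro x hx
    have harg : Real.sqrt μ * x / 2 = c * x := by rw [hc]; ring
    have hch : Real.exp (c * x) / 2 ≤ Real.cosh (c * x) := by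
      rw [Real.cosh_eq]
      have := Real.exp_pos (-(c * x))
      linarith
    have hch0 : (0:ℝ) < Real.exp (c * x) / 2 := by positivity
    have h4 : (Real.exp (c * x) / 2) ^ 4 ≤ Real.cosh (c * x) ^ 4 := by
      exact pow_le_pow_left₀ hch0.le hch 4
    have hFle : F x ≤ c ^ 2 / (Real.exp (c * x) / 2) ^ 4 := by
      rw [hF]
      simp only [harg]
      rw [div_pow, ← pow_mul]
      apply div_le_div_of_nonneg_left (by positivity) (by positivity)
      exact h4
    calc F x ≤ c ^ 2 / (Real.exp (c * x) / 2) ^ 4 := hFle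
      _ = 16 * c ^ 2 * Real.exp (-(4 * c) * x) := by
          have h1 : (Real.exp (c * x)) ^ 4 = Real.exp (4 * (c * x)) := by
            rw [← Real.exp_nat_mul]; norm_num
          have h2 : Real.exp (-(4 * c) * x) = (Real.exp (4 * (c * x)))⁻¹ := by
            rw [show -(4 * c) * x = -(4 * (c * x)) by ring, Real.exp_neg]
          rw [h2]; simp only [div_pow]; rw [h1]
          have := Real.exp_pos (4 * (c * x))
          field_simp
          ring
  have hIoi : IntegrableOn F (Ioi 0) := by
    apply integrable_of_isBigO_exp_neg (a := 0) (b := 4 * c) (by positivity)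
      hcont.continuousOn
    apply Asymptotics.IsBigO.of_bound (16 * c ^ 2)
    filter_upwards [Filter.eventually_ge_atTop (0:ℝ)] with x hx
    rw [Real.norm_eq_abs, Real.norm_eq_abs, abs_of_nonneg (by positivity : (0:ℝ) ≤ F x),
      abs_of_nonneg (Real.exp_pos _).le]
    exact hbound x hx
  have hIci : IntegrableOn F (Ici 0) := (integrableOn_Ici_iff_integrableOn_Ioi).mpr hIoi
  have hIic : IntegrableOn F (Iic 0) := by
    rw [← Measure.map_neg_eq_self (volume : Measure ℝ)]
    have m : MeasurableEmbedding fun x : ℝ => -x := (Homeomorph.neg ℝ).measurableEmbedding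
    rw [m.integrableOn_map_iff]
    have : (F ∘ fun x : ℝ => -x) = F := by
      funext x
      simp only [Function.comp_apply, hF]
      have : Real.sqrt μ * -x / 2 = -(Real.sqrt μ * x / 2) := by ring
      rw [this, Real.cosh_neg]
    rw [this]
    simpa [neg_preimage, neg_Iic, neg_zero] using hIci
  have : IntegrableOn F (Iic 0 ∪ Ioi 0) := hIic.union hIoi
  rwa [Iic_union_Ioi, integrableOn_univ] at this

end Aux

/-- key step of the second proof of Proposition 3.2: sign of the
transversal component `ψ_T` of the adjoint eigenfunction in the toy example. -/
theorem stmt_19 (μ : ℝ) (hμ : 0 < μ)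
    (φL : ℝ → ℝ) (hφL : φL = fun x => Real.tanh (Real.sqrt μ * x / 2))
    (N : ℝ) (hN : N = (∫ x : ℝ, (deriv φL x) ^ 2)⁻¹)
    (ψT : ℝ → ℝ) (hC2 : ContDiff ℝ 2 ψT)
    (hbdd : ∃ M : ℝ, ∀ x : ℝ, |ψT x| ≤ M)
    (hODE : ∀ x ∈ Set.Ici (0:ℝ),
      deriv (deriv ψT) x = ψT x + N * (1 - μ) * φL x * deriv φL x)
    (h0 : ψT 0 = 0)
    (hlim : Filter.Tendsto ψT Filter.atTop (nhds 0)) :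
    (μ < 1 → ∀ x > (0:ℝ), ψT x < 0) ∧
    (μ = 1 → ∀ x ∈ Set.Ici (0:ℝ), ψT x = 0) ∧
    (1 < μ → ∀ x > (0:ℝ), 0 < ψT x) := by
  subst hφL
  set g : ℝ → ℝ := fun x => Real.sqrt μ / 2 / Real.cosh (Real.sqrt μ * x / 2) ^ 2 with hg
  have hder : deriv (fun x => Real.tanh (Real.sqrt μ * x / 2)) = g :=
    funext fun x => (phi_hasDerivAt19 μ x).deriv
  have hgpos : ∀ x : ℝ, 0 < g x := by
    intro x
    have h1 : 0 < Real.sqrt μ := Real.sqrt_pos.mpr hμ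
    have h2 := Real.cosh_pos (Real.sqrt μ * x / 2)
    positivity
  have hNpos : 0 < N := by
    rw [hN, hder]
    apply inv_pos.mpr
    rw [integral_pos_iff_support_of_nonneg (fun x => sq_nonneg (g x))
      (g2_integrable19 μ hμ)]
    have hsupp : Function.support (fun x => g x ^ 2) = Set.univ := by
      apply Set.eq_univ_iff_forall.mpr
      intro x
      exact Function.mem_support.mpr (ne_of_gt (pow_pos (hgpos x) 2))
    rw [hsupp, Real.volume_univ]
    exact ENNReal.zero_lt_top
  simp only [hder] at hODE
  have htanh_nonneg : ∀ x : ℝ, 0 ≤ x → 0 ≤ Real.tanh (Real.sqrt μ * x / 2) := by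
    intro x hx
    rw [Real.tanh_eq_sinh_div_cosh]
    exact div_nonneg (Real.sinh_nonneg_iff.mpr
      (by positivity)) (Real.cosh_pos _).le
  have htanh_pos : ∀ x : ℝ, 0 < x → 0 < Real.tanh (Real.sqrt μ * x / 2) := by
    intro x hx
    rw [Real.tanh_eq_sinh_div_cosh]
    have h1 : 0 < Real.sqrt μ := Real.sqrt_pos.mpr hμ
    exact div_pos (Real.sinh_pos_iff.mpr (by positivity)) (Real.cosh_pos _)
  refine ⟨?_, ?_, ?_⟩
  · -- μ < 1
    intro hμ1
    exact neg_aux19 (f := fun x => N * (1 - μ) * Real.tanh (Real.sqrt μ * x / 2) * g x)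
      hC2 hODE
      (fun x hx => mul_nonneg (mul_nonneg (mul_nonneg hNpos.le (by linarith))
        (htanh_nonneg x hx)) (hgpos x).le)
      (fun x hx => mul_pos (mul_pos (mul_pos hNpos (by linarith))
        (htanh_pos x hx)) (hgpos x))
      h0 hlim
  · -- μ = 1
    intro hμ1
    have hODE0 : ∀ x ∈ Ici (0:ℝ),
        deriv (deriv ψT) x = ψT x + (fun _ : ℝ => (0:ℝ)) x := by
      intro x hx
      rw [hODE x hx, hμ1]
      norm_num
    have hle := nonpos_aux19 hC2 hODE0 (fun x _ => le_refl 0) h0 hlim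
    have hODEneg : ∀ x ∈ Ici (0:ℝ),
        deriv (deriv fun y => -ψT y) x = (fun y => -ψT y) x + (fun _ : ℝ => (0:ℝ)) x := by
      intro x hx
      have e : deriv (deriv fun y => -ψT y) x = -(deriv (deriv ψT) x) := by
        rw [deriv.fun_neg']
        exact deriv.fun_neg
      rw [e, hODE0 x hx]
      simp
    have hge := nonpos_aux19 hC2.neg hODEneg (fun x _ => le_refl 0)
      (by simpa using h0) (by simpa using hlim.neg)
    intro x hx
    have h1 := hle x hx
    have h2 := hge x hx
    linarith
  · -- 1 < μ
    intro hμ1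
    have hODEneg : ∀ x ∈ Ici (0:ℝ),
        deriv (deriv fun y => -ψT y) x
          = (fun y => -ψT y) x + (fun x => N * (μ - 1) * Real.tanh (Real.sqrt μ * x / 2) * g x) x := by
      intro x hx
      have e : deriv (deriv fun y => -ψT y) x = -(deriv (deriv ψT) x) := by
        rw [deriv.fun_neg']
        exact deriv.fun_neg
      rw [e, hODE x hx]
      ring
    have hneg := neg_aux19 hC2.neg hODEneg
      (fun x hx => mul_nonneg (mul_nonneg (mul_nonneg hNpos.le (by linarith))
        (htanh_nonneg x hx)) (hgpos x).le)
      (fun x hx => mul_pos (mul_pos (mul_pos hNpos (by linarith))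
        (htanh_pos x hx)) (hgpos x))
      (by simpa using h0) (by simpa using hlim.neg)
    intro x hx
    have := hneg x hx
    linarith
end
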